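/- Fix ℏ ∈ ℂ with ℏ ≠ 0 and N ∈ ℂ. On the space of Laurent polynomials ℂ[λ, λ⁻¹], define the operators a = (λ/2)·d/dλ + λ/ℏ − 1/4, b = multiplication by λ², and c_N = (1/4)·d²/dλ² + (1/ℏ)·d/dλ + 1/ℏ² + (1−4N²)/(16λ²). Then the following operator identities hold: [a, b] = b, [c_N, a] = c_N, [c_N, b] = 2a + 1, and b∘c_N = a² − N²/4. -/

import Mathlib

/- Leibniz' rule with `lD λ^k = k λ^(k-1)` moves every derivative to the right of every
multiplication by a power of `λ`; both sides of each identity then become the same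
ℂ-linear combination of the terms `λ^k · f^(j)`. -/

noncomputable section

namespace BGW9

open LaurentPolynomial

/-- The derivative `d/dλ` on Laurent polynomials: `T^n ↦ n·T^{n−1}`. -/
def lD (f : LaurentPolynomial ℂ) : LaurentPolynomial ℂ :=
  f.coeff.sum fun n c => (c * (n : ℂ)) • (T (n-1) : LaurentPolynomial ℂ)

/-- The Kac–Schwarz operator `a = (λ/2)·d/dλ + λ/ℏ − 1/4`. -/
def aOp (ℏ : ℂ) (f : LaurentPolynomial ℂ) : LaurentPolynomial ℂ :=
  (1/2 : ℂ) • (T 1 * lD f) + ℏ⁻¹ • (T 1 * f) - (1/4 : ℂ) • f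

/-- The Kac–Schwarz operator `b = λ²` (multiplication). -/
def bOp (f : LaurentPolynomial ℂ) : LaurentPolynomial ℂ := T 2 * f

/-- The Kac–Schwarz operator `c_N = (1/4)·d²/dλ² + (1/ℏ)·d/dλ + 1/ℏ² + (1−4N²)/(16λ²)`. -/
def cOp (ℏ N : ℂ) (f : LaurentPolynomial ℂ) : LaurentPolynomial ℂ :=
  (1/4 : ℂ) • lD (lD f) + ℏ⁻¹ • lD f + (ℏ^2)⁻¹ • f
    + ((1 - 4*N^2)/16) • (T (-2) * f)

lemma lD_add (f g : LaurentPolynomial ℂ) : lD (f + g) = lD f + lD g :=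
  Finsupp.sum_add_index' (by simp) (fun _ _ _ => by rw [add_mul, add_smul])

lemma lD_smul (c : ℂ) (f : LaurentPolynomial ℂ) : lD (c • f) = c • lD f := by
  unfold lD
  rw [AddMonoidAlgebra.coeff_smul, Finsupp.sum_smul_index (by simp), Finsupp.smul_sum]
  simp only [mul_assoc, smul_smul]

lemma lD_sub (f g : LaurentPolynomial ℂ) : lD (f - g) = lD f - lD g := by
  rw [sub_eq_add_neg, ← neg_one_smul ℂ g, lD_add, lD_smul, neg_one_smul, ← sub_eq_add_neg]

lemma lD_C_mul_T (a : ℂ) (n : ℤ) : lD (C a * T n) = (a * n) • T (n - 1) := by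
  rw [← single_eq_C_mul_T]
  exact Finsupp.sum_single_index (by simp)

lemma lD_T (n : ℤ) : lD (T n : LaurentPolynomial ℂ) = (n : ℂ) • T (n - 1) := by
  simpa using lD_C_mul_T 1 n

lemma lD_mul (f g : LaurentPolynomial ℂ) : lD (f * g) = lD f * g + f * lD g := by
  induction f using LaurentPolynomial.induction_on' with
  | add p q hp hq => rw [add_mul, lD_add, hp, hq, lD_add]; ring
  | C_mul_T m a =>
    induction g using LaurentPolynomial.induction_on' with
    | add p q hp hq => rw [mul_add, lD_add, hp, hq, lD_add]; ring
    | C_mul_T n b =>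
      have hprod : C a * T m * (C b * T n) = C (a * b) * T (m + n) := by
        rw [map_mul, T_add]; ring
      rw [hprod, lD_C_mul_T, lD_C_mul_T, lD_C_mul_T]
      simp only [smul_eq_C_mul, map_mul, T_sub, T_add, Int.cast_add, map_add]
      ring

end BGW9

open BGW9

theorem kac_schwarz_algebra_general (ℏ N : ℂ) :
    (∀ f : LaurentPolynomial ℂ, aOp ℏ (bOp f) - bOp (aOp ℏ f) = bOp f) ∧
    (∀ f : LaurentPolynomial ℂ,
      cOp ℏ N (aOp ℏ f) - aOp ℏ (cOp ℏ N f) = cOp ℏ N f) ∧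
    (∀ f : LaurentPolynomial ℂ,
      cOp ℏ N (bOp f) - bOp (cOp ℏ N f) = (2 : ℂ) • aOp ℏ f + f) ∧
    (∀ f : LaurentPolynomial ℂ,
      bOp (cOp ℏ N f) = aOp ℏ (aOp ℏ f) - (N^2/4) • f) := by
  refine ⟨fun f => ?_, fun f => ?_, fun f => ?_, fun f => ?_⟩ <;>
  · simp only [aOp, bOp, cOp, lD_add, lD_sub, lD_smul, lD_mul, lD_T, smul_mul_assoc, mul_add,
      mul_sub, mul_smul_comm, smul_add, smul_sub, smul_smul, ← mul_assoc,
      ← LaurentPolynomial.T_add]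
    norm_num <;> module

/-- the operator identities `[a,b] = b`, `[c_N,a] = c_N`,
`[c_N,b] = 2a + 1` and `b∘c_N = a² − N²/4` on `ℂ[λ,λ⁻¹]`. -/
theorem kac_schwarz_algebra (ℏ N : ℂ) (hℏ : ℏ ≠ 0) :
    (∀ f : LaurentPolynomial ℂ, aOp ℏ (bOp f) - bOp (aOp ℏ f) = bOp f) ∧
    (∀ f : LaurentPolynomial ℂ,
      cOp ℏ N (aOp ℏ f) - aOp ℏ (cOp ℏ N f) = cOp ℏ N f) ∧
    (∀ f : LaurentPolynomial ℂ,
      cOp ℏ N (bOp f) - bOp (cOp ℏ N f) = (2 : ℂ) • aOp ℏ f + f) ∧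
    (∀ f : LaurentPolynomial ℂ,
      bOp (cOp ℏ N f) = aOp ℏ (aOp ℏ f) - (N^2/4) • f) :=
  kac_schwarz_algebra_general ℏ N
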